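/- arXiv:2010.11835 — 2 statements merged into one kernel-verified Lean document; each statement's English description precedes it below -/
import Mathlib

section
/- Let φ⁺ ∈ Φ be a maximizer of V+ over Φ. Then |max_{φ∈Φ} Vρ(φ) − Vρ(φ⁺)| ≤ 2 · max_{φ∈Φ} ( ρ̂(σ(φ)) − D(σ(φ)) ). (Loss due to decentralization: applying the first h decision rules of an optimal policy of the converted standard Dec-POMDP to the Dec-ρPOMDP loses at most twice the maximal gap between the expected centralized and decentralized prediction rewards.) -/
/-- The expected centralized prediction reward `ρ̂(σ)`. -/
noncomputable def rhoHat (n : ℕ) (S : Type) [Fintype S]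
    (Z : Fin n → Type) [∀ i, Fintype (Z i)]
    (A : Type) [Fintype A] [Nonempty A] (α : A → S → ℝ)
    (σ : S → (∀ i, Z i) → ℝ) : ℝ :=
  ∑ z : ∀ i, Z i, Finset.univ.sup' Finset.univ_nonempty fun a : A => ∑ s, σ s z * α a s

/-- The expected decentralized prediction reward `D(σ)` under the optimal joint
prediction rule. -/
noncomputable def decReward (n : ℕ) (S : Type) [Fintype S]
    (Z : Fin n → Type) [∀ i, Fintype (Z i)] [∀ i, DecidableEq (Z i)]
    (A : Type) [Fintype A] [Nonempty A] (α : A → S → ℝ)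
    (σ : S → (∀ i, Z i) → ℝ) : ℝ :=
  (1 / n : ℝ) * ∑ i : Fin n, ∑ zi : Z i,
    Finset.univ.sup' Finset.univ_nonempty fun a : A =>
      ∑ z ∈ Finset.univ.filter (fun z : ∀ j, Z j => z i = zi), ∑ s, σ s z * α a s


/-!
The decentralized reward never exceeds the centralized one: for each agent `i`, choosing one
prediction per individual history `zᵢ` is the same as choosing a prediction per joint history
that depends on `zᵢ` only, and a sum of maxima dominates the maximum of a sum. Writing
`Vρ = V⁺ + (ρ̂ - D)` with `ρ̂ - D ≥ 0`, for every `φ` we get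
`Vρ(φ) ≤ V⁺(φ⁺) + max (ρ̂ - D) ≤ Vρ(φ⁺) + max (ρ̂ - D)`, so the loss is even bounded by
`max (ρ̂ - D)`.
-/

open Finset

theorem Finset.sup'_sum_le_sum_sup' {A ι M : Type*} [AddCommMonoid M] [LinearOrder M]
    [IsOrderedAddMonoid M] (s : Finset A) (hs : s.Nonempty) (t : Finset ι) (g : A → ι → M) :
    s.sup' hs (fun a => ∑ x ∈ t, g a x) ≤ ∑ x ∈ t, s.sup' hs (fun a => g a x) :=
  sup'_le _ _ fun _ ha => sum_le_sum fun x _ => le_sup' (fun a => g a x) ha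

theorem sum_sup'_sum_fiber_le_sum_sup' {A β ι M : Type*} [Fintype A] [Nonempty A] [Fintype β]
    [Fintype ι] [DecidableEq ι] [AddCommMonoid M] [LinearOrder M] [IsOrderedAddMonoid M]
    (f : β → ι) (g : A → β → M) :
    ∑ y, univ.sup' univ_nonempty (fun a => ∑ x with f x = y, g a x)
      ≤ ∑ x, univ.sup' univ_nonempty (fun a => g a x) :=
  calc ∑ y, univ.sup' univ_nonempty (fun a => ∑ x with f x = y, g a x)
      ≤ ∑ y, ∑ x with f x = y, univ.sup' univ_nonempty (fun a => g a x) :=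
        sum_le_sum fun _ _ => sup'_sum_le_sum_sup' _ _ _ _
    _ = ∑ x, univ.sup' univ_nonempty (fun a => g a x) := sum_fiberwise _ _ _

theorem decReward_le_rhoHat {n : ℕ} (hn : 1 ≤ n) {S : Type} [Fintype S]
    {Z : Fin n → Type} [∀ i, Fintype (Z i)] [∀ i, DecidableEq (Z i)]
    {A : Type} [Fintype A] [Nonempty A] (α : A → S → ℝ) (σ : S → (∀ i, Z i) → ℝ) :
    decReward n S Z A α σ ≤ rhoHat n S Z A α σ := by
  have hagent (i : Fin n) := sum_sup'_sum_fiber_le_sum_sup' (fun z : ∀ j, Z j => z i)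
    (fun (a : A) z => ∑ s, σ s z * α a s)
  have hn' : (0 : ℝ) < n := by exact_mod_cast hn
  calc decReward n S Z A α σ ≤ (1 / n : ℝ) * ∑ _i : Fin n, rhoHat n S Z A α σ :=
        mul_le_mul_of_nonneg_left (sum_le_sum fun i _ => hagent i) (by positivity)
    _ = rhoHat n S Z A α σ := by
        rw [sum_const, card_univ, Fintype.card_fin, nsmul_eq_mul]
        field_simp

theorem abs_sup'_sub_le_sup'_sub_of_isMaxOn {ι M : Type*} [AddCommGroup M] [LinearOrder M]
    [IsOrderedAddMonoid M] {s : Finset ι} (hs : s.Nonempty) {V W : ι → M} {i₀ : ι}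
    (hi₀ : i₀ ∈ s) (hWV : ∀ i ∈ s, W i ≤ V i) (hmax : IsMaxOn W s i₀) :
    |s.sup' hs V - V i₀| ≤ s.sup' hs (V - W) := by
  have hgap (i) (hi : i ∈ s) : V i - W i ≤ s.sup' hs (V - W) := le_sup' (V - W) hi
  have hle : V i₀ ≤ s.sup' hs V := le_sup' V hi₀
  rw [abs_of_nonneg (sub_nonneg.2 hle), sub_le_iff_le_add]
  refine sup'_le _ _ fun i hi => ?_
  calc V i = W i + (V i - W i) := (add_sub_cancel _ _).symm
    _ ≤ V i₀ + s.sup' hs (V - W) :=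
        add_le_add ((hmax hi).trans (hWV i₀ hi₀)) (hgap i hi)
    _ = s.sup' hs (V - W) + V i₀ := add_comm _ _

theorem loss_due_to_decentralization_general
    (n : ℕ) (hn : 1 ≤ n)
    (S : Type) [Fintype S]
    (Z : Fin n → Type) [∀ i, Fintype (Z i)] [∀ i, DecidableEq (Z i)]
    (A : Type) [Fintype A] [Nonempty A]
    (α : A → S → ℝ)
    (Φ : Type) [Fintype Φ] [Nonempty Φ]
    (C : Φ → ℝ)
    (σ : Φ → S → (∀ i, Z i) → ℝ)
    (φplus : Φ)
    (hmax : ∀ φ, C φ + decReward n S Z A α (σ φ) ≤ C φplus + decReward n S Z A α (σ φplus)) :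
    |(Finset.univ.sup' Finset.univ_nonempty fun φ => C φ + rhoHat n S Z A α (σ φ))
        - (C φplus + rhoHat n S Z A α (σ φplus))|
      ≤ 2 * Finset.univ.sup' Finset.univ_nonempty
          (fun φ => rhoHat n S Z A α (σ φ) - decReward n S Z A α (σ φ)) := by
  have hgap := abs_sup'_sub_le_sup'_sub_of_isMaxOn univ_nonempty (mem_univ φplus)
    (V := fun φ => C φ + rhoHat n S Z A α (σ φ)) (W := fun φ => C φ + decReward n S Z A α (σ φ))
    (fun φ _ => add_le_add_right (decReward_le_rhoHat hn α (σ φ)) _) (fun φ _ => hmax φ)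
  simp only [Pi.sub_apply, add_sub_add_left_eq_sub] at hgap
  have hgap_nonneg : 0 ≤ univ.sup' univ_nonempty
      (fun φ => rhoHat n S Z A α (σ φ) - decReward n S Z A α (σ φ)) := (abs_nonneg _).trans hgap
  linarith

/-- Loss due to decentralization: if `φ⁺` maximizes the converted standard
Dec-POMDP value `V⁺(φ) = C(φ) + D(σ(φ))` over `Φ`, then the loss of applying it
to the Dec-ρPOMDP (with value `Vρ(φ) = C(φ) + ρ̂(σ(φ))`) is bounded by twice the
maximal gap between the expected centralized and decentralized prediction
rewards. -/
theorem loss_due_to_decentralization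
    (n : ℕ) (hn : 1 ≤ n)
    (S : Type) [Fintype S] [Nonempty S]
    (Z : Fin n → Type) [∀ i, Fintype (Z i)] [∀ i, Nonempty (Z i)] [∀ i, DecidableEq (Z i)]
    (A : Type) [Fintype A] [Nonempty A]
    (α : A → S → ℝ)
    (Φ : Type) [Fintype Φ] [Nonempty Φ]
    (C : Φ → ℝ)
    (σ : Φ → S → (∀ i, Z i) → ℝ)
    (hσ0 : ∀ φ s z, 0 ≤ σ φ s z)
    (hσ1 : ∀ φ, ∑ s, ∑ z, σ φ s z = 1)
    (φplus : Φ)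
    (hmax : ∀ φ, C φ + decReward n S Z A α (σ φ) ≤ C φplus + decReward n S Z A α (σ φplus)) :
    |(Finset.univ.sup' Finset.univ_nonempty fun φ => C φ + rhoHat n S Z A α (σ φ))
        - (C φplus + rhoHat n S Z A α (σ φplus))|
      ≤ 2 * Finset.univ.sup' Finset.univ_nonempty
          (fun φ => rhoHat n S Z A α (σ φ) - decReward n S Z A α (σ φ)) :=
  loss_due_to_decentralization_general n hn S Z A α Φ C σ φplus hmax
end

section
/- Suppose that for every agent i the joint statistic factorizes as σ(s,z) = σ_i^{SZ}(s,z_i) · σ_{-i}(z_{-i}) for all s and z, where σ_i^{SZ}(s,z_i) := Σ_{z_{-i}} σ(s,z) and σ_{-i}(z_{-i}) := Σ_s Σ_{z_i} σ(s,z) are the corresponding marginals (i.e., for every agent the pair consisting of the state and that agent's own observation history is independent of the other agents' observation histories). Then the expected decentralized prediction reward under the optimal joint prediction rule equals the expected centralized prediction reward: D(σ) = ρ̂(σ), so the loss due to decentralization is zero. -/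
private lemma mul_sup'_aux {ι : Type*} (s : Finset ι) (h : s.Nonempty) (c : ℝ) (hc : 0 ≤ c)
    (f : ι → ℝ) : s.sup' h (fun a => c * f a) = c * s.sup' h f := by
  rw [Finset.comp_sup'_eq_sup'_comp h (fun x : ℝ => c * x)
    (fun x y => by simpa using mul_max_of_nonneg x y hc)]
  rfl

/-- If for every agent `i` the joint statistic factorizes as
`σ(s,z) = σ_i^{SZ}(s,z_i) · σ_{-i}(z_{-i})` (the pair of state and agent `i`'s
own observation history is independent of the other agents' histories), then
the expected decentralized prediction reward under the optimal joint prediction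
rule equals the expected centralized prediction reward: `D(σ) = ρ̂(σ)`. -/
theorem decentralized_eq_centralized_of_independence
    (n : ℕ) (hn : 1 ≤ n)
    (S : Type) [Fintype S] [Nonempty S]
    (Z : Fin n → Type) [∀ i, Fintype (Z i)] [∀ i, Nonempty (Z i)] [∀ i, DecidableEq (Z i)]
    (A : Type) [Fintype A] [Nonempty A]
    (α : A → S → ℝ)
    (σ : S → (∀ i, Z i) → ℝ)
    (hσ0 : ∀ s z, 0 ≤ σ s z)
    (hσ1 : ∑ s, ∑ z, σ s z = 1)
    (hfact : ∀ (i : Fin n) (s : S) (z : ∀ j, Z j),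
      σ s z =
        (∑ z' ∈ Finset.univ.filter (fun z' : ∀ j, Z j => z' i = z i), σ s z') *
        (∑ s' : S, ∑ zi : Z i, σ s' (Function.update z i zi))) :
    (1 / n : ℝ) * ∑ i : Fin n, ∑ zi : Z i,
        (Finset.univ.sup' Finset.univ_nonempty fun a : A =>
          ∑ z ∈ Finset.univ.filter (fun z : ∀ j, Z j => z i = zi), ∑ s, σ s z * α a s)
      = ∑ z : ∀ i, Z i,
          Finset.univ.sup' Finset.univ_nonempty fun a : A => ∑ s, σ s z * α a s := by
  -- per-agent notation
  set RHS := ∑ z : ∀ i, Z i,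
      Finset.univ.sup' Finset.univ_nonempty fun a : A => ∑ s, σ s z * α a s with hRHS
  have key : ∀ i : Fin n,
      (∑ zi : Z i, Finset.univ.sup' Finset.univ_nonempty fun a : A =>
        ∑ z ∈ Finset.univ.filter (fun z : ∀ j, Z j => z i = zi), ∑ s, σ s z * α a s)
      = RHS := by
    intro i
    set μ : S → Z i → ℝ := fun s zi =>
      ∑ z' ∈ Finset.univ.filter (fun z' : ∀ j, Z j => z' i = zi), σ s z' with hμ
    set ν : (∀ j, Z j) → ℝ := fun z => ∑ s' : S, ∑ zi : Z i, σ s' (Function.update z i zi)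
      with hν
    have hfact' : ∀ s z, σ s z = μ s (z i) * ν z := fun s z => hfact i s z
    have hμ0 : ∀ s zi, 0 ≤ μ s zi := fun s zi =>
      Finset.sum_nonneg fun z _ => hσ0 s z
    have hν0 : ∀ z, 0 ≤ ν z := fun z =>
      Finset.sum_nonneg fun s _ => Finset.sum_nonneg fun zi _ => hσ0 _ _
    -- decentralized term rewrite
    have hdec : ∀ zi : Z i, ∀ a : A,
        (∑ z ∈ Finset.univ.filter (fun z : ∀ j, Z j => z i = zi), ∑ s, σ s z * α a s)
        = ∑ s, μ s zi * α a s := by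
      intro zi a
      rw [Finset.sum_comm]
      refine Finset.sum_congr rfl fun s _ => ?_
      rw [hμ, ← Finset.sum_mul]
    -- fiber of centralized sum
    have hfiber : ∀ zi : Z i,
        (∑ z ∈ Finset.univ.filter (fun z : ∀ j, Z j => z i = zi),
          Finset.univ.sup' Finset.univ_nonempty fun a : A => ∑ s, σ s z * α a s)
        = Finset.univ.sup' Finset.univ_nonempty fun a : A => ∑ s, μ s zi * α a s := by
      intro zi
      set C : ℝ := Finset.univ.sup' Finset.univ_nonempty fun a : A => ∑ s, μ s zi * α a s
        with hC
      have hz : ∀ z ∈ Finset.univ.filter (fun z : ∀ j, Z j => z i = zi),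
          (Finset.univ.sup' Finset.univ_nonempty fun a : A => ∑ s, σ s z * α a s)
          = ν z * C := by
        intro z hzmem
        have hzz : z i = zi := (Finset.mem_filter.mp hzmem).2
        rw [hC, ← mul_sup'_aux _ _ _ (hν0 z)]
        refine Finset.sup'_congr _ rfl fun a _ => ?_
        rw [Finset.mul_sum]
        refine Finset.sum_congr rfl fun s _ => ?_
        rw [hfact' s z, hzz]; ring
      rw [Finset.sum_congr rfl hz, ← Finset.sum_mul]
      -- now show (∑ ν over fiber) * C = C
      by_cases hm : (∑ s, μ s zi) = 0
      · have hμz : ∀ s : S, μ s zi = 0 := by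
          intro s
          have := (Finset.sum_eq_zero_iff_of_nonneg
            (fun s _ => hμ0 s zi)).mp hm s (Finset.mem_univ s)
          exact this
        have hC0 : C = 0 := by
          rw [hC]
          have : ∀ a : A, (∑ s, μ s zi * α a s) = 0 := fun a =>
            Finset.sum_eq_zero fun s _ => by rw [hμz s, zero_mul]
          rw [show (fun a : A => ∑ s, μ s zi * α a s) = fun _ => (0:ℝ) from funext this]
          simp
        rw [hC0, mul_zero]
      · have hT : (∑ z ∈ Finset.univ.filter (fun z : ∀ j, Z j => z i = zi), ν z) = 1 := by
          have h1 : (∑ s, μ s zi)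
              = (∑ s, μ s zi) *
                (∑ z ∈ Finset.univ.filter (fun z : ∀ j, Z j => z i = zi), ν z) := by
            calc (∑ s, μ s zi)
                = ∑ s, ∑ z ∈ Finset.univ.filter (fun z : ∀ j, Z j => z i = zi), σ s z := rfl
              _ = ∑ z ∈ Finset.univ.filter (fun z : ∀ j, Z j => z i = zi), ∑ s, σ s z :=
                  Finset.sum_comm
              _ = ∑ z ∈ Finset.univ.filter (fun z : ∀ j, Z j => z i = zi),
                    (∑ s, μ s zi) * ν z := by
                  refine Finset.sum_congr rfl fun z hzmem => ?_
                  have hzz : z i = zi := (Finset.mem_filter.mp hzmem).2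
                  rw [Finset.sum_mul]
                  exact Finset.sum_congr rfl fun s _ => by rw [hfact' s z, hzz]
              _ = (∑ s, μ s zi) *
                    (∑ z ∈ Finset.univ.filter (fun z : ∀ j, Z j => z i = zi), ν z) := by
                  rw [Finset.mul_sum]
          have := mul_left_cancel₀ hm (h1.symm.trans (mul_one _).symm)
          linarith [this]
        rw [hT, one_mul]
    calc (∑ zi : Z i, Finset.univ.sup' Finset.univ_nonempty fun a : A =>
          ∑ z ∈ Finset.univ.filter (fun z : ∀ j, Z j => z i = zi), ∑ s, σ s z * α a s)
        = ∑ zi : Z i, Finset.univ.sup' Finset.univ_nonempty fun a : A =>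
            ∑ s, μ s zi * α a s := by
          refine Finset.sum_congr rfl fun zi _ => ?_
          exact Finset.sup'_congr _ rfl fun a _ => hdec zi a
      _ = ∑ zi : Z i, ∑ z ∈ Finset.univ.filter (fun z : ∀ j, Z j => z i = zi),
            Finset.univ.sup' Finset.univ_nonempty fun a : A => ∑ s, σ s z * α a s := by
          exact Finset.sum_congr rfl fun zi _ => (hfiber zi).symm
      _ = RHS := by
          rw [hRHS]
          exact Finset.sum_fiberwise _ (fun z : ∀ j, Z j => z i) _
  rw [Finset.sum_congr rfl fun i _ => key i, Finset.sum_const, Finset.card_univ,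
    Fintype.card_fin, nsmul_eq_mul]
  have hn' : (n : ℝ) ≠ 0 := Nat.cast_ne_zero.mpr (by omega)
  field_simp
end
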